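/- arXiv:0809.1789 — 7 statements merged into one kernel-verified Lean document; each statement's English description precedes it below -/
import Mathlib

section
/- Let X be a real Banach space and C ≥ 1. Suppose that for every finite set T₁,…,Tₙ of surjective linear isometries of X there exists an inner product (·|·)* on X, invariant under each Tᵢ (i.e. (Tᵢx|Tᵢy)* = (x|y)* for all x,y), satisfying C⁻²‖x‖² ≤ (x|x)* ≤ C²‖x‖² for all x ∈ X. Then there exists an inner product (·|·) on X invariant under the full group of surjective linear isometries of X and satisfying C⁻²‖x‖² ≤ (x|x) ≤ C²‖x‖² for all x ∈ X. -/
/-!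
For each finite set `S` of isometries pick an `S`-invariant form `B_S` with the required bounds.
The diagonal values `B_S x x` lie in the compact interval `[C⁻²‖x‖², C²‖x‖²]`, so they converge
along an ultrafilter finer than `atTop` on finite sets, and by polarization so do all the
`B_S x y`. The limit is again a symmetric bilinear form with the same (closed) bounds, and it is
invariant under every isometry `T`, since `B_S` is `T`-invariant as soon as `T ∈ S`.
-/

open Filter Topology

/-- `B` is a symmetric bilinear form on the real vector space `X`. -/
def IsSymmBilin {X : Type*} [AddCommGroup X] [Module ℝ X] (B : X → X → ℝ) : Prop :=
  (∀ x y z : X, B (x + y) z = B x z + B y z) ∧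
  (∀ (a : ℝ) (x y : X), B (a • x) y = a * B x y) ∧
  (∀ x y : X, B x y = B y x)

theorem exists_forall_mem_finset_of_forall_fin {G β : Type*} {P : β → Prop} {Q : G → β → Prop}
    (h : ∀ (n : ℕ) (T : Fin n → G), ∃ b, P b ∧ ∀ i, Q (T i) b) (S : Finset G) :
    ∃ b, P b ∧ ∀ g ∈ S, Q g b := by
  obtain ⟨b, hP, hQ⟩ := h S.card fun i => S.equivFin.symm i
  exact ⟨b, hP, fun g hg => by simpa using hQ (S.equivFin ⟨g, hg⟩)⟩

namespace IsSymmBilin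

variable {X : Type*} [AddCommGroup X] [Module ℝ X] {B : X → X → ℝ}

theorem two_mul_apply (hB : IsSymmBilin B) (x y : X) :
    2 * B x y = B (x + y) (x + y) - B x x - B y y := by
  obtain ⟨hadd, -, hsymm⟩ := hB
  rw [hadd, hsymm x (x + y), hsymm y (x + y), hadd, hadd, hsymm y x]
  ring

theorem of_tendsto {ι : Type*} {F : Filter ι} [F.NeBot] {Bs : ι → X → X → ℝ}
    (hBs : ∀ᶠ i in F, IsSymmBilin (Bs i))
    (hlim : ∀ x y, Tendsto (fun i => Bs i x y) F (𝓝 (B x y))) : IsSymmBilin B := by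
  refine ⟨fun x y z => ?_, fun a x y => ?_, fun x y => ?_⟩
  · exact tendsto_nhds_unique_of_eventuallyEq (hlim _ _) ((hlim x z).add (hlim y z))
      (hBs.mono fun i hi => hi.1 x y z)
  · exact tendsto_nhds_unique_of_eventuallyEq (hlim _ _) ((hlim x y).const_mul a)
      (hBs.mono fun i hi => hi.2.1 a x y)
  · exact tendsto_nhds_unique_of_eventuallyEq (hlim _ _) (hlim y x)
      (hBs.mono fun i hi => hi.2.2 x y)

theorem exists_tendsto_of_diag_mem_isCompact {ι : Type*} (U : Ultrafilter ι)
    {Bs : ι → X → X → ℝ} (hBs : ∀ i, IsSymmBilin (Bs i)) {K : X → Set ℝ}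
    (hK : ∀ x, IsCompact (K x)) (hdiag : ∀ i x, Bs i x x ∈ K x) :
    ∃ B, IsSymmBilin B ∧ ∀ x y, Tendsto (fun i => Bs i x y) U (𝓝 (B x y)) := by
  have hq : ∀ x, ∃ q, Tendsto (fun i => Bs i x x) U (𝓝 q) := fun x =>
    let ⟨q, _, hq⟩ := (hK x).ultrafilter_le_nhds' (U.map fun i => Bs i x x)
      (Ultrafilter.mem_map.2 (univ_mem' fun i => hdiag i x))
    ⟨q, hq⟩
  choose q hq using hq
  have hlim : ∀ x y, ∃ c, Tendsto (fun i => Bs i x y) U (𝓝 c) := by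
    intro x y
    refine ⟨(q (x + y) - q x - q y) / 2, ?_⟩
    have hpol : (fun i => Bs i x y) = fun i => (Bs i (x + y) (x + y) - Bs i x x - Bs i y y) / 2 :=
      funext fun i => by rw [← (hBs i).two_mul_apply]; ring
    rw [hpol]
    exact (((hq _).sub (hq x)).sub (hq y)).div_const 2
  choose B hB using hlim
  exact ⟨B, of_tendsto (.of_forall hBs) hB, hB⟩

end IsSymmBilin

theorem stmt0_general {X : Type*} [NormedAddCommGroup X] [NormedSpace ℝ X]
    {C : ℝ}
    (h : ∀ (n : ℕ) (T : Fin n → (X ≃ₗᵢ[ℝ] X)), ∃ B : X → X → ℝ,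
      IsSymmBilin B ∧
      (∀ (i : Fin n) (x y : X), B (T i x) (T i y) = B x y) ∧
      (∀ x : X, (C ^ 2)⁻¹ * ‖x‖ ^ 2 ≤ B x x ∧ B x x ≤ C ^ 2 * ‖x‖ ^ 2)) :
    ∃ B : X → X → ℝ,
      IsSymmBilin B ∧
      (∀ (T : X ≃ₗᵢ[ℝ] X) (x y : X), B (T x) (T y) = B x y) ∧
      (∀ x : X, (C ^ 2)⁻¹ * ‖x‖ ^ 2 ≤ B x x ∧ B x x ≤ C ^ 2 * ‖x‖ ^ 2) := by
  have hfin := exists_forall_mem_finset_of_forall_fin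
    (P := fun B => IsSymmBilin B ∧
      ∀ x : X, (C ^ 2)⁻¹ * ‖x‖ ^ 2 ≤ B x x ∧ B x x ≤ C ^ 2 * ‖x‖ ^ 2)
    (Q := fun (T : X ≃ₗᵢ[ℝ] X) B => ∀ x y, B (T x) (T y) = B x y)
    fun n T => (h n T).imp fun _ ⟨hB, hinv, hbd⟩ => ⟨⟨hB, hbd⟩, hinv⟩
  choose Bs hBs hinv using hfin
  let U := Ultrafilter.of (atTop : Filter (Finset (X ≃ₗᵢ[ℝ] X)))
  obtain ⟨B, hB, hlim⟩ := IsSymmBilin.exists_tendsto_of_diag_mem_isCompact U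
    (fun S => (hBs S).1) (fun _ => isCompact_Icc) fun S x => (hBs S).2 x
  refine ⟨B, hB, fun T x y => ?_, fun x =>
    isClosed_Icc.mem_of_tendsto (hlim x x) (.of_forall fun S => (hBs S).2 x)⟩
  have hT : ∀ᶠ S in (U : Filter (Finset (X ≃ₗᵢ[ℝ] X))), T ∈ S :=
    Ultrafilter.of_le _ <| (eventually_ge_atTop {T}).mono
      fun _ hS => Finset.singleton_subset_iff.mp hS
  exact tendsto_nhds_unique_of_eventuallyEq (hlim _ _) (hlim x y)
    (hT.mono fun S hS => hinv S T hS x y)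

theorem stmt0 {X : Type*} [NormedAddCommGroup X] [NormedSpace ℝ X] [CompleteSpace X]
    {C : ℝ} (hC : 1 ≤ C)
    (h : ∀ (n : ℕ) (T : Fin n → (X ≃ₗᵢ[ℝ] X)), ∃ B : X → X → ℝ,
      IsSymmBilin B ∧
      (∀ (i : Fin n) (x y : X), B (T i x) (T i y) = B x y) ∧
      (∀ x : X, (C ^ 2)⁻¹ * ‖x‖ ^ 2 ≤ B x x ∧ B x x ≤ C ^ 2 * ‖x‖ ^ 2)) :
    ∃ B : X → X → ℝ,
      IsSymmBilin B ∧
      (∀ (T : X ≃ₗᵢ[ℝ] X) (x y : X), B (T x) (T y) = B x y) ∧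
      (∀ x : X, (C ^ 2)⁻¹ * ‖x‖ ^ 2 ≤ B x x ∧ B x x ≤ C ^ 2 * ‖x‖ ^ 2) :=
  stmt0_general h
end

section
/- Let X be a reflexive real Banach space and let M be a downward-directed family of closed subspaces of X (directed by reverse inclusion) with ⋂_{E ∈ M} E = {0}. Then for every x ∈ X, sup_{E ∈ M} dist(x, E) = ‖x‖. -/
/-!
Let `s = sup_E dist(x, E)`. A functional annihilating `E` satisfies `‖f x‖ ≤ ‖f‖ dist(x, E)`, and by
directedness the union of the annihilators of the members of `M` is a subspace of the dual, so
`‖f x‖ ≤ s ‖f‖` on that subspace. Reflexivity makes it dense: a functional on the dual vanishing on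
all annihilators is evaluation at a point lying in every `E`, hence at `0`. The bound passes to the
closure, i.e. to the whole dual, and Hahn–Banach gives `‖x‖ ≤ s`.
-/

open Metric StrongDual

section

variable {𝕜 X : Type*} [RCLike 𝕜] [NormedAddCommGroup X] [NormedSpace 𝕜 X]

theorem Submodule.infDist_le_norm (E : Submodule 𝕜 X) (x : X) : infDist x E ≤ ‖x‖ := by
  simpa using infDist_le_dist_of_mem (x := x) E.zero_mem

theorem Submodule.mem_of_forall_mem_polarSubmodule_apply_eq_zero {E : Submodule 𝕜 X}
    (hE : IsClosed (E : Set X)) {z : X} (h : ∀ f ∈ polarSubmodule 𝕜 E, f z = 0) : z ∈ E := by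
  have := hE
  by_contra hz
  obtain ⟨g, hg⟩ := SeparatingDual.exists_ne_zero (R := 𝕜) (x := E.mkQ z)
    (by simpa [Submodule.Quotient.mk_eq_zero] using hz)
  refine hg (h (g.comp E.mkQL) ((mem_polarSubmodule _ _ _).2 fun y hy => ?_))
  simp [(Submodule.Quotient.mk_eq_zero E).2 hy]

theorem polarSubmodule_anti {E F : Submodule 𝕜 X} (h : E ≤ F) :
    polarSubmodule 𝕜 F ≤ polarSubmodule 𝕜 E := fun _ hf =>
  (mem_polarSubmodule _ _ _).2 fun y hy => (mem_polarSubmodule _ _ _).1 hf y (h hy)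

theorem norm_apply_le_mul_infDist {E : Submodule 𝕜 X} {f : StrongDual 𝕜 X}
    (hf : f ∈ polarSubmodule 𝕜 E) (x : X) : ‖f x‖ ≤ ‖f‖ * infDist x E := by
  rcases (norm_nonneg f).eq_or_lt with hf0 | hfpos
  · simp [norm_eq_zero.1 hf0.symm]
  rw [← div_le_iff₀' hfpos, le_infDist ⟨0, E.zero_mem⟩]
  intro y hy
  rw [div_le_iff₀' hfpos, dist_eq_norm]
  calc ‖f x‖ = ‖f (x - y)‖ := by simp [(mem_polarSubmodule _ _ _).1 hf y hy]
    _ ≤ ‖f‖ * ‖x - y‖ := f.le_opNorm _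

variable {M : Set (Submodule 𝕜 X)}

theorem directed_polarSubmodule (hdir : ∀ E₁ ∈ M, ∀ E₂ ∈ M, ∃ E ∈ M, E ≤ E₁ ⊓ E₂) :
    Directed (· ≤ ·) fun E : M => polarSubmodule 𝕜 (E : Submodule 𝕜 X) := fun E₁ E₂ => by
  obtain ⟨E, hE, hE₁₂⟩ := hdir E₁ E₁.2 E₂ E₂.2
  exact ⟨⟨E, hE⟩, polarSubmodule_anti (hE₁₂.trans inf_le_left),
    polarSubmodule_anti (hE₁₂.trans inf_le_right)⟩

theorem norm_apply_le_iSup_infDist_mul [Nonempty M]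
    (hdir : ∀ E₁ ∈ M, ∀ E₂ ∈ M, ∃ E ∈ M, E ≤ E₁ ⊓ E₂) (x : X) {f : StrongDual 𝕜 X}
    (hf : f ∈ ⨆ E : M, polarSubmodule 𝕜 (E : Submodule 𝕜 X)) :
    ‖f x‖ ≤ (⨆ E : M, infDist x ((E : Submodule 𝕜 X) : Set X)) * ‖f‖ := by
  obtain ⟨E, hfE⟩ := (Submodule.mem_iSup_of_directed _ (directed_polarSubmodule hdir)).1 hf
  have hbdd : BddAbove (Set.range fun E : M => infDist x ((E : Submodule 𝕜 X) : Set X)) :=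
    ⟨‖x‖, Set.forall_mem_range.2 fun E => (E : Submodule 𝕜 X).infDist_le_norm x⟩
  rw [mul_comm]
  exact (norm_apply_le_mul_infDist hfE x).trans <|
    mul_le_mul_of_nonneg_left (le_ciSup hbdd E) (norm_nonneg f)

theorem iSup_polarSubmodule_topologicalClosure_eq_top
    (hrefl : Function.Surjective (NormedSpace.inclusionInDoubleDual 𝕜 X))
    (hclosed : ∀ E ∈ M, IsClosed (E : Set X)) (hinter : (⋂ E ∈ M, (E : Set X)) = {0}) :
    (⨆ E : M, polarSubmodule 𝕜 (E : Submodule 𝕜 X)).topologicalClosure = ⊤ := by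
  refine Submodule.eq_top_iff'.2 fun g =>
    Submodule.mem_of_forall_mem_polarSubmodule_apply_eq_zero
      (Submodule.isClosed_topologicalClosure _) fun Φ hΦ => ?_
  obtain ⟨z, rfl⟩ := hrefl Φ
  have hz : z ∈ ⋂ E ∈ M, (E : Set X) := Set.mem_iInter₂.2 fun E hE =>
    Submodule.mem_of_forall_mem_polarSubmodule_apply_eq_zero (hclosed E hE) fun f hf =>
      (mem_polarSubmodule _ _ _).1 hΦ f <| Submodule.le_topologicalClosure _ <|
        (le_iSup (fun E : M => polarSubmodule 𝕜 (E : Submodule 𝕜 X)) ⟨E, hE⟩) hf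
  rw [hinter, Set.mem_singleton_iff] at hz
  simp [hz]

theorem iSup_infDist_eq_norm
    (hrefl : Function.Surjective (NormedSpace.inclusionInDoubleDual 𝕜 X))
    (hclosed : ∀ E ∈ M, IsClosed (E : Set X))
    (hdir : ∀ E₁ ∈ M, ∀ E₂ ∈ M, ∃ E ∈ M, E ≤ E₁ ⊓ E₂)
    (hinter : (⋂ E ∈ M, (E : Set X)) = {0}) (x : X) :
    ⨆ E : M, infDist x ((E : Submodule 𝕜 X) : Set X) = ‖x‖ := by
  rcases M.eq_empty_or_nonempty with rfl | hM
  · have hx : x ∈ (⋂ E ∈ (∅ : Set (Submodule 𝕜 X)), (E : Set X)) := by simp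
    simp_all
  have : Nonempty M := hM.to_subtype
  refine le_antisymm (ciSup_le fun E => (E : Submodule 𝕜 X).infDist_le_norm x) <|
    NormedSpace.norm_le_dual_bound 𝕜 x (Real.iSup_nonneg fun _ => infDist_nonneg) fun f => ?_
  have hf : f ∈ (⨆ E : M, polarSubmodule 𝕜 (E : Submodule 𝕜 X)).topologicalClosure := by
    rw [iSup_polarSubmodule_topologicalClosure_eq_top hrefl hclosed hinter]
    trivial
  have hclosedBound : IsClosed {f : StrongDual 𝕜 X |
      ‖f x‖ ≤ (⨆ E : M, infDist x ((E : Submodule 𝕜 X) : Set X)) * ‖f‖} :=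
    isClosed_le (by fun_prop) (by fun_prop)
  exact closure_minimal (fun _ hg => norm_apply_le_iSup_infDist_mul hdir x hg) hclosedBound hf

end

theorem stmt4_general {X : Type*} [NormedAddCommGroup X] [NormedSpace ℝ X]
    (hrefl : Function.Surjective (NormedSpace.inclusionInDoubleDual ℝ X))
    (M : Set (Submodule ℝ X))
    (hclosed : ∀ E ∈ M, IsClosed (E : Set X))
    (hdir : ∀ E₁ ∈ M, ∀ E₂ ∈ M, ∃ E ∈ M, E ≤ E₁ ⊓ E₂)
    (hinter : (⋂ E ∈ M, (E : Set X)) = {0}) :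
    ∀ x : X, (⨆ E : M, Metric.infDist x ((E : Submodule ℝ X) : Set X)) = ‖x‖ :=
  iSup_infDist_eq_norm hrefl hclosed hdir hinter

theorem stmt4 {X : Type*} [NormedAddCommGroup X] [NormedSpace ℝ X] [CompleteSpace X]
    (hrefl : Function.Surjective (NormedSpace.inclusionInDoubleDual ℝ X))
    (M : Set (Submodule ℝ X))
    (hclosed : ∀ E ∈ M, IsClosed (E : Set X))
    (hdir : ∀ E₁ ∈ M, ∀ E₂ ∈ M, ∃ E ∈ M, E ≤ E₁ ⊓ E₂)
    (hinter : (⋂ E ∈ M, (E : Set X)) = {0}) :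
    ∀ x : X, (⨆ E : M, Metric.infDist x ((E : Submodule ℝ X) : Set X)) = ‖x‖ :=
  stmt4_general hrefl M hclosed hdir hinter
end

section
/- Let (X, ‖·‖) be a real Banach space, H an inner product space, G ⊆ G(X) a subgroup satisfying property (∗), and S : X → H a bounded linear isomorphism with bounded inverse. Then there exists an inner product (·|·)_X on X such that ‖S⁻¹‖⁻²‖x‖² ≤ (x|x)_X ≤ ‖S‖²‖x‖² for all x ∈ X, and (Tx|Ty)_X = (x|y)_X for all x, y ∈ X and all T in the strong-operator closure of G. -/
/-!
The invariant inner product is a limit of approximate ones. Given finitely many `T ∈ G` and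
finitely many points, Hahn–Banach yields a closed finite-codimensional `Z` with `‖x‖ ≤ dist(x, Z)`
at those points, and property (∗) shrinks `Z` to a `Y` invariant under the `T`s. The quotient
`X ⧸ Y` is finite-dimensional and embeds into `H` (by `S` followed by the projection onto
`(S Y)ᗮ`) with the same distortion as `S`, so averaging over its compact isometry group with Haar
measure gives an isometry-invariant inner product on `X ⧸ Y` with the required bounds; pulled back
to `X` it is invariant under the `T`s. The approximations are uniformly bounded, so by Tychonoff
they have a cluster point along the directed set of finite data. It is `G`-invariant and satisfies
both bounds, hence is continuous, and continuity carries the invariance to the strong-operator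
closure of `G`.
-/

/-- Property (∗). -/
def PropStar {X : Type*} [NormedAddCommGroup X] [NormedSpace ℝ X]
    (G : Subgroup (X ≃ₗᵢ[ℝ] X)) : Prop :=
  ∀ (n : ℕ) (T : Fin n → (X ≃ₗᵢ[ℝ] X)), (∀ i, T i ∈ G) →
    ∀ Z : Submodule ℝ X, IsClosed (Z : Set X) → FiniteDimensional ℝ (X ⧸ Z) →
      ∃ Y : Submodule ℝ X, IsClosed (Y : Set X) ∧ FiniteDimensional ℝ (X ⧸ Y) ∧ Y ≤ Z ∧
        ∀ i, Submodule.map ((T i).toLinearEquiv : X →ₗ[ℝ] X) Y = Y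

/-- `T` belongs to the closure of `G` in the strong operator topology. -/
def InSOTClosure {X : Type*} [NormedAddCommGroup X] [NormedSpace ℝ X]
    (G : Subgroup (X ≃ₗᵢ[ℝ] X)) (T : X →L[ℝ] X) : Prop :=
  ∀ (s : Finset X) (ε : ℝ), 0 < ε → ∃ S ∈ G, ∀ z ∈ s, ‖S z - T z‖ < ε

open Filter Topology Metric MeasureTheory
open scoped RealInnerProductSpace

structure IsSymmBilinForm {X : Type*} [AddCommGroup X] [Module ℝ X] (B : X → X → ℝ) : Prop where
  add_left : ∀ x y z, B (x + y) z = B x z + B y z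
  smul_left : ∀ (a : ℝ) x y, B (a • x) y = a * B x y
  symm : ∀ x y, B x y = B y x

namespace IsSymmBilinForm

section Module
variable {X V : Type*} [AddCommGroup X] [Module ℝ X] [AddCommGroup V] [Module ℝ V]
  {B : X → X → ℝ}

theorem add_right (hB : IsSymmBilinForm B) (x y z : X) : B x (y + z) = B x y + B x z := by
  rw [hB.symm, hB.add_left, hB.symm y, hB.symm z]

theorem smul_right (hB : IsSymmBilinForm B) (a : ℝ) (x y : X) : B x (a • y) = a * B x y := by
  rw [hB.symm, hB.smul_left, hB.symm]

def toBilinForm (hB : IsSymmBilinForm B) : LinearMap.BilinForm ℝ X :=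
  LinearMap.mk₂ ℝ B hB.add_left hB.smul_left hB.add_right hB.smul_right

theorem sq_le_mul (hB : IsSymmBilinForm B) (h0 : ∀ x, 0 ≤ B x x) (x y : X) :
    B x y ^ 2 ≤ B x x * B y y :=
  hB.toBilinForm.apply_sq_le_of_symm h0 (LinearMap.isSymm_def.2 hB.symm) x y

theorem comp (hB : IsSymmBilinForm B) (f : V →ₗ[ℝ] X) :
    IsSymmBilinForm fun x y => B (f x) (f y) where
  add_left x y z := by simp only [map_add, hB.add_left]
  smul_left a x y := by simp only [map_smul, hB.smul_left]
  symm x y := hB.symm _ _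

end Module

theorem isClosed_setOf {X : Type*} [AddCommGroup X] [Module ℝ X] :
    IsClosed {B : X → X → ℝ | IsSymmBilinForm B} := by
  have : {B : X → X → ℝ | IsSymmBilinForm B} =
      {B | ∀ x y z, B (x + y) z = B x z + B y z} ∩
      {B | ∀ (a : ℝ) x y, B (a • x) y = a * B x y} ∩ {B | ∀ x y, B x y = B y x} := by
    ext B
    exact ⟨fun h => ⟨⟨h.1, h.2⟩, h.3⟩, fun h => ⟨h.1.1, h.1.2, h.2⟩⟩
  rw [this]
  simp only [Set.ofPred_forall]
  refine .inter (.inter ?_ ?_) ?_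
  · exact isClosed_iInter fun x => isClosed_iInter fun y => isClosed_iInter fun z =>
      isClosed_eq (by fun_prop) (by fun_prop)
  · exact isClosed_iInter fun a => isClosed_iInter fun x => isClosed_iInter fun y =>
      isClosed_eq (by fun_prop) (by fun_prop)
  · exact isClosed_iInter fun x => isClosed_iInter fun y => isClosed_eq (by fun_prop) (by fun_prop)

section Normed
variable {X : Type*} [SeminormedAddCommGroup X] [NormedSpace ℝ X] {B : X → X → ℝ} {C : ℝ}

theorem abs_apply_le (hB : IsSymmBilinForm B) (h0 : ∀ x, 0 ≤ B x x) (hC : 0 ≤ C)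
    (hle : ∀ x, B x x ≤ C * ‖x‖ ^ 2) (x y : X) : |B x y| ≤ C * ‖x‖ * ‖y‖ := by
  refine abs_le_of_sq_le_sq ?_ (by positivity)
  calc B x y ^ 2 ≤ B x x * B y y := hB.sq_le_mul h0 x y
    _ ≤ (C * ‖x‖ ^ 2) * (C * ‖y‖ ^ 2) := mul_le_mul (hle x) (hle y) (h0 y) (by positivity)
    _ = (C * ‖x‖ * ‖y‖) ^ 2 := by ring

theorem continuous (hB : IsSymmBilinForm B) (h0 : ∀ x, 0 ≤ B x x) (hC : 0 ≤ C)
    (hle : ∀ x, B x x ≤ C * ‖x‖ ^ 2) : Continuous fun p : X × X => B p.1 p.2 :=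
  (hB.toBilinForm.mkContinuous₂ C fun x y => hB.abs_apply_le h0 hC hle x y).continuous₂

theorem exists_mapClusterPt {ι : Type*} {l : Filter ι} [l.NeBot] {B : ι → X → X → ℝ}
    (hC : 0 ≤ C) (hB : ∀ i, IsSymmBilinForm (B i)) (h0 : ∀ i x, 0 ≤ B i x x)
    (hle : ∀ i x, B i x x ≤ C * ‖x‖ ^ 2) : ∃ L, MapClusterPt L l B := by
  let K : Set (X → X → ℝ) :=
    Set.univ.pi fun x => Set.univ.pi fun y => Set.Icc (-(C * ‖x‖ * ‖y‖)) (C * ‖x‖ * ‖y‖)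
  have hK : IsCompact K := isCompact_univ_pi fun x => isCompact_univ_pi fun y => isCompact_Icc
  obtain ⟨L, -, hL⟩ := hK.exists_mapClusterPt (f := l) (u := B) <| le_principal_iff.2 <|
    mem_map.2 <| univ_mem' fun i x _ y _ => abs_le.1 ((hB i).abs_apply_le (h0 i) hC (hle i) x y)
  exact ⟨L, hL⟩

end Normed
end IsSymmBilinForm

section Averaging

variable {V : Type*} [NormedAddCommGroup V] [NormedSpace ℝ V]

variable (V) in
def unitClosedBallSubmonoid : Submonoid (V →L[ℝ] V) where
  carrier := closedBall 0 1
  one_mem' := mem_closedBall_zero_iff.2 ContinuousLinearMap.norm_id_le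
  mul_mem' {f g} hf hg := by
    rw [mem_closedBall_zero_iff] at *
    exact (ContinuousLinearMap.opNorm_comp_le f g).trans (mul_le_one₀ hf (norm_nonneg g) hg)

theorem mem_unitClosedBallSubmonoid {f : V →L[ℝ] V} :
    f ∈ unitClosedBallSubmonoid V ↔ ‖f‖ ≤ 1 :=
  mem_closedBall_zero_iff

theorem norm_apply_of_mem_units {u : (V →L[ℝ] V)ˣ} (hu : u ∈ (unitClosedBallSubmonoid V).units)
    (v : V) : ‖(u : V →L[ℝ] V) v‖ = ‖v‖ := by
  rw [Submonoid.mem_units_iff, mem_unitClosedBallSubmonoid, mem_unitClosedBallSubmonoid] at hu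
  refine le_antisymm ((u : V →L[ℝ] V).le_of_opNorm_le hu.1 v |>.trans_eq (one_mul _)) ?_
  calc ‖v‖ = ‖(↑u⁻¹ : V →L[ℝ] V) ((u : V →L[ℝ] V) v)‖ := by
        rw [← mul_apply_eq_comp, Units.inv_mul, one_apply_eq_self]
    _ ≤ ‖(u : V →L[ℝ] V) v‖ := (↑u⁻¹ : V →L[ℝ] V).le_of_opNorm_le hu.2 _ |>.trans_eq (one_mul _)

theorem LinearIsometryEquiv.toUnit_mem_units (e : V ≃ₗᵢ[ℝ] V) :
    e.toContinuousLinearEquiv.toUnit ∈ (unitClosedBallSubmonoid V).units := by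
  rw [Submonoid.mem_units_iff, mem_unitClosedBallSubmonoid, mem_unitClosedBallSubmonoid]
  exact ⟨e.toLinearIsometry.norm_toContinuousLinearMap_le,
    e.symm.toLinearIsometry.norm_toContinuousLinearMap_le⟩

theorem isCompact_units_unitClosedBallSubmonoid [FiniteDimensional ℝ V] :
    IsCompact ((unitClosedBallSubmonoid V).units : Set (V →L[ℝ] V)ˣ) :=
  Submonoid.units_isCompact (isCompact_closedBall 0 1)

variable {H : Type*} [NormedAddCommGroup H] [InnerProductSpace ℝ H]

theorem exists_isSymmBilinForm_isometry_invariant [FiniteDimensional ℝ V] (g : V →ₗ[ℝ] H)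
    {a A : ℝ} (ha : 0 ≤ a) (hlow : ∀ v, a * ‖v‖ ≤ ‖g v‖) (hup : ∀ v, ‖g v‖ ≤ A * ‖v‖) :
    ∃ b : V → V → ℝ, IsSymmBilinForm b ∧
      (∀ x, a ^ 2 * ‖x‖ ^ 2 ≤ b x x ∧ b x x ≤ A ^ 2 * ‖x‖ ^ 2) ∧
      ∀ (e : V ≃ₗᵢ[ℝ] V) (x y : V), b (e x) (e y) = b x y := by
  let Γ := (unitClosedBallSubmonoid V).units
  have : CompactSpace Γ := isCompact_iff_compactSpace.mp isCompact_units_unitClosedBallSubmonoid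
  borelize ↥Γ
  let μ : Measure Γ := Measure.haarMeasure ⊤
  have : IsProbabilityMeasure μ := ⟨Measure.haarMeasure_self⟩
  -- averaging over `γ⁻¹` turns the left invariance of `μ` into invariance of the form
  let act : Γ → V →L[ℝ] V := fun γ => ((γ⁻¹ : Γ) : (V →L[ℝ] V)ˣ)
  have hact_cont : Continuous act := by fun_prop
  let f : V → V → Γ → ℝ := fun x y γ => ⟪g (act γ x), g (act γ y)⟫
  have hf : ∀ x y, Integrable (f x y) μ := fun x y =>
    (by fun_prop : Continuous (f x y)).integrable_of_hasCompactSupport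
      (HasCompactSupport.of_compactSpace _)
  have hnorm : ∀ γ x, ‖act γ x‖ = ‖x‖ := fun γ => norm_apply_of_mem_units (γ⁻¹).2
  have hf_self : ∀ x γ, f x x γ = ‖g (act γ x)‖ ^ 2 := fun x γ => real_inner_self_eq_norm_sq _
  refine ⟨fun x y => ∫ γ, f x y γ ∂μ, ⟨fun x y z => ?_, fun r x y => ?_, fun x y => ?_⟩,
    fun x => ⟨?_, ?_⟩, fun e x y => ?_⟩
  · rw [← integral_add (hf x z) (hf y z)]
    simp only [f, map_add, inner_add_left]
  · rw [← integral_const_mul]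
    simp only [f, map_smul, real_inner_smul_left]
  · simp only [f, real_inner_comm]
  · calc a ^ 2 * ‖x‖ ^ 2 = ∫ _, a ^ 2 * ‖x‖ ^ 2 ∂μ := by simp
      _ ≤ ∫ γ, f x x γ ∂μ := integral_mono (integrable_const _) (hf x x) fun γ => by
          rw [hf_self, ← hnorm γ x, ← mul_pow]
          exact pow_le_pow_left₀ (by positivity) (hlow _) 2
  · calc ∫ γ, f x x γ ∂μ ≤ ∫ _, A ^ 2 * ‖x‖ ^ 2 ∂μ := integral_mono (hf x x) (integrable_const _)
          fun γ => by
            rw [hf_self, ← hnorm γ x, ← mul_pow]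
            exact pow_le_pow_left₀ (norm_nonneg _) (hup _) 2
      _ = A ^ 2 * ‖x‖ ^ 2 := by simp
  · let u : Γ := ⟨e.toContinuousLinearEquiv.toUnit, e.toUnit_mem_units⟩
    have hact_e : ∀ γ v, act γ (e v) = act (u⁻¹ * γ) v := fun γ v => by
      simp only [act, mul_inv_rev, inv_inv, Subgroup.coe_mul, Units.val_mul]
      rfl
    simp only [f, hact_e]
    exact integral_mul_left_eq_self (f x y) u⁻¹

end Averaging

section Quotient

variable {X : Type*} [SeminormedAddCommGroup X] [NormedSpace ℝ X]

theorem Submodule.Quotient.norm_mk_eq_infDist (Y : Submodule ℝ X) (x : X) :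
    ‖(Submodule.Quotient.mk x : X ⧸ Y)‖ = infDist x Y :=
  QuotientAddGroup.norm_mk (S := Y.toAddSubgroup) x

def LinearIsometryEquiv.quotient (T : X ≃ₗᵢ[ℝ] X) (Y : Submodule ℝ X)
    (hY : Y.map (T.toLinearEquiv : X →ₗ[ℝ] X) = Y) : (X ⧸ Y) ≃ₗᵢ[ℝ] X ⧸ Y where
  toLinearEquiv := Submodule.Quotient.equiv Y Y T.toLinearEquiv hY
  norm_map' := by
    rintro ⟨x⟩
    have hTY : (T : X → X) '' Y = Y := congrArg ((↑) : Submodule ℝ X → Set X) hY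
    change ‖(Submodule.Quotient.mk (T x) : X ⧸ Y)‖ = ‖(Submodule.Quotient.mk x : X ⧸ Y)‖
    rw [Submodule.Quotient.norm_mk_eq_infDist, Submodule.Quotient.norm_mk_eq_infDist,
      ← infDist_image T.isometry (x := x) (t := Y), hTY]

@[simp]
theorem LinearIsometryEquiv.quotient_mk (T : X ≃ₗᵢ[ℝ] X) (Y : Submodule ℝ X)
    (hY : Y.map (T.toLinearEquiv : X →ₗ[ℝ] X) = Y) (x : X) :
    T.quotient Y hY (Submodule.Quotient.mk x) = Submodule.Quotient.mk (T x) := rfl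

theorem Submodule.norm_liftQ_apply_le {F : Type*} [SeminormedAddCommGroup F] [NormedSpace ℝ F]
    (Y : Submodule ℝ X) (f : X →L[ℝ] F) (hf : Y ≤ LinearMap.ker (f : X →ₗ[ℝ] F))
    (v : X ⧸ Y) : ‖Y.liftQ (f : X →ₗ[ℝ] F) hf v‖ ≤ ‖f‖ * ‖v‖ := by
  let f' := (f : X →+ F).mkNormedAddGroupHom ‖f‖ f.le_opNorm
  calc ‖Y.liftQ (f : X →ₗ[ℝ] F) hf v‖ ≤ ‖f'‖ * ‖v‖ :=
        QuotientAddGroup.norm_lift_apply_le (S := Y.toAddSubgroup) f' (fun x hx => hf hx) v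
    _ ≤ ‖f‖ * ‖v‖ := by
        gcongr
        exact AddMonoidHom.mkNormedAddGroupHom_norm_le _ (norm_nonneg f) _

end Quotient

section Approximation

variable {X : Type*} [NormedAddCommGroup X] [NormedSpace ℝ X]

theorem exists_finiteCodim_le_infDist (s : Finset X) :
    ∃ Z : Submodule ℝ X, IsClosed (Z : Set X) ∧ FiniteDimensional ℝ (X ⧸ Z) ∧
      ∀ x ∈ s, ‖x‖ ≤ infDist x Z := by
  choose φ hφ_norm hφ_apply using fun x : X => exists_dual_vector'' ℝ x
  let Φ : X →L[ℝ] (s → ℝ) := ContinuousLinearMap.pi fun x => φ x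
  refine ⟨LinearMap.ker (Φ : X →ₗ[ℝ] s → ℝ), Φ.isClosed_ker,
    Module.Finite.equiv (Φ : X →ₗ[ℝ] s → ℝ).quotKerEquivRange.symm, fun x hx => ?_⟩
  refine (le_infDist ⟨0, Submodule.zero_mem _⟩).2 fun z hz => ?_
  have hφz : φ x z = 0 := congrFun hz ⟨x, hx⟩
  calc ‖x‖ = φ x (x - z) := by simp [hφz, hφ_apply]
    _ ≤ ‖φ x‖ * ‖x - z‖ := (le_abs_self _).trans ((φ x).le_opNorm _)
    _ ≤ ‖x - z‖ := mul_le_of_le_one_left (norm_nonneg _) (hφ_norm x)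
    _ = dist x z := (dist_eq_norm x z).symm

theorem PropStar.exists_map_eq {G : Subgroup (X ≃ₗᵢ[ℝ] X)} (hG : PropStar G) (F : Finset G)
    {Z : Submodule ℝ X} (hZ : IsClosed (Z : Set X)) (hZfin : FiniteDimensional ℝ (X ⧸ Z)) :
    ∃ Y : Submodule ℝ X, IsClosed (Y : Set X) ∧ FiniteDimensional ℝ (X ⧸ Y) ∧ Y ≤ Z ∧
      ∀ T ∈ F, Y.map ((T : X ≃ₗᵢ[ℝ] X).toLinearEquiv : X →ₗ[ℝ] X) = Y := by
  obtain ⟨Y, hY, hYfin, hYZ, hYT⟩ :=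
    hG F.card (fun i => F.equivFin.symm i) (fun i => (F.equivFin.symm i : G).2) Z hZ hZfin
  refine ⟨Y, hY, hYfin, hYZ, fun T hT => ?_⟩
  simpa using hYT (F.equivFin ⟨T, hT⟩)

variable [CompleteSpace X] {H : Type*} [NormedAddCommGroup H] [InnerProductSpace ℝ H]

theorem ContinuousLinearEquiv.exists_quotient_linearMap_bounds (S : X ≃L[ℝ] H)
    {Y : Submodule ℝ X} (hY : IsClosed (Y : Set X)) :
    ∃ g : X ⧸ Y →ₗ[ℝ] H, ∀ v : X ⧸ Y,
      ‖(S.symm : H →L[ℝ] X)‖⁻¹ * ‖v‖ ≤ ‖g v‖ ∧ ‖g v‖ ≤ ‖(S : X →L[ℝ] H)‖ * ‖v‖ := by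
  have : CompleteSpace H :=
    (completeSpace_congr (e := S.toLinearEquiv.toEquiv) S.isUniformEmbedding).1 ‹_›
  set K := Y.map (S : X →ₗ[ℝ] H)
  have : CompleteSpace K := (S.toHomeomorph.isClosedMap _ hY).completeSpace_coe
  let P := Kᗮ.starProjection ∘L (S : X →L[ℝ] H)
  have hP : Y ≤ LinearMap.ker (P : X →ₗ[ℝ] H) := fun y hy =>
    Kᗮ.starProjection_apply_eq_zero_iff.2 (K.le_orthogonal_orthogonal ⟨y, hy, rfl⟩)
  refine ⟨Y.liftQ (P : X →ₗ[ℝ] H) hP, fun v => ⟨?_, ?_⟩⟩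
  · obtain ⟨x, rfl⟩ := Y.mkQ_surjective v
    obtain ⟨y, hy, hSy⟩ : K.starProjection (S x) ∈ K := K.starProjection_apply_mem _
    have hxy : x - y = S.symm (P x) := by
      simp [P, Submodule.starProjection_orthogonal_val, ← hSy]
    refine inv_mul_le_of_le_mul₀ (norm_nonneg _) (norm_nonneg _) ?_
    calc ‖Y.mkQ x‖ = ‖Y.mkQ (x - y)‖ := by simp [(Submodule.Quotient.mk_eq_zero Y).2 hy]
      _ ≤ ‖x - y‖ := Submodule.Quotient.norm_mk_le _ _
      _ ≤ ‖(S.symm : H →L[ℝ] X)‖ * ‖P x‖ := hxy ▸ (S.symm : H →L[ℝ] X).le_opNorm _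
  · calc ‖Y.liftQ (P : X →ₗ[ℝ] H) hP v‖ ≤ ‖P‖ * ‖v‖ := Y.norm_liftQ_apply_le P hP v
      _ ≤ ‖(S : X →L[ℝ] H)‖ * ‖v‖ := by
        gcongr
        exact (ContinuousLinearMap.opNorm_comp_le _ _).trans
          (mul_le_of_le_one_left (norm_nonneg _) (Kᗮ.starProjection_norm_le))

theorem PropStar.exists_isSymmBilinForm {G : Subgroup (X ≃ₗᵢ[ℝ] X)} (hG : PropStar G)
    (S : X ≃L[ℝ] H) (F : Finset G) (s : Finset X) :
    ∃ B : X → X → ℝ, IsSymmBilinForm B ∧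
      (∀ x, 0 ≤ B x x ∧ B x x ≤ ‖(S : X →L[ℝ] H)‖ ^ 2 * ‖x‖ ^ 2) ∧
      (∀ x ∈ s, ‖(S.symm : H →L[ℝ] X)‖⁻¹ ^ 2 * ‖x‖ ^ 2 ≤ B x x) ∧
      ∀ T ∈ F, ∀ x y, B ((T : X ≃ₗᵢ[ℝ] X) x) ((T : X ≃ₗᵢ[ℝ] X) y) = B x y := by
  obtain ⟨Z, hZ, hZfin, hsZ⟩ := exists_finiteCodim_le_infDist s
  obtain ⟨Y, hY, hYfin, hYZ, hYT⟩ := hG.exists_map_eq F hZ hZfin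
  have : IsClosed (Y : Set X) := hY
  obtain ⟨g, hg⟩ := S.exists_quotient_linearMap_bounds hY
  obtain ⟨b, hb, hb_bounds, hb_inv⟩ := exists_isSymmBilinForm_isometry_invariant g
    (by positivity) (fun v => (hg v).1) (fun v => (hg v).2)
  refine ⟨fun x y => b (Y.mkQ x) (Y.mkQ y), hb.comp Y.mkQ, fun x => ⟨?_, ?_⟩, fun x hx => ?_,
    fun T hT x y => ?_⟩
  · exact le_trans (by positivity) (hb_bounds _).1
  · exact (hb_bounds _).2.trans (by gcongr; exact Submodule.Quotient.norm_mk_le _ _)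
  · refine le_trans ?_ (hb_bounds _).1
    gcongr
    calc ‖x‖ ≤ infDist x Z := hsZ x hx
      _ ≤ infDist x Y := infDist_le_infDist_of_subset hYZ ⟨0, Y.zero_mem⟩
      _ = ‖Y.mkQ x‖ := (Submodule.Quotient.norm_mk_eq_infDist Y x).symm
  · simpa using hb_inv ((T : X ≃ₗᵢ[ℝ] X).quotient Y (hYT T hT)) (Y.mkQ x) (Y.mkQ y)

end Approximation

theorem InSOTClosure.apply_eq {X : Type*} [NormedAddCommGroup X] [NormedSpace ℝ X]
    {G : Subgroup (X ≃ₗᵢ[ℝ] X)} {T : X →L[ℝ] X} (hT : InSOTClosure G T) {B : X → X → ℝ}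
    (hB : Continuous fun p : X × X => B p.1 p.2) (hG : ∀ S ∈ G, ∀ x y, B (S x) (S y) = B x y)
    (x y : X) : B (T x) (T y) = B x y := by
  classical
  have hmem : (T x, T y) ∈ closure ((fun S : X ≃ₗᵢ[ℝ] X => (S x, S y)) '' G) := by
    refine Metric.mem_closure_iff.2 fun ε hε => ?_
    obtain ⟨S, hS, hSε⟩ := hT {x, y} ε hε
    refine ⟨_, ⟨S, hS, rfl⟩, ?_⟩
    rw [Prod.dist_eq, dist_eq_norm, dist_eq_norm, norm_sub_rev, norm_sub_rev (T y)]
    exact max_lt (hSε x (by simp)) (hSε y (by simp))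
  exact closure_minimal (t := {p | B p.1 p.2 = B x y})
    (by rintro _ ⟨S, hS, rfl⟩; exact hG S hS x y) (isClosed_eq hB continuous_const) hmem

theorem stmt9 {X : Type*} [NormedAddCommGroup X] [NormedSpace ℝ X] [CompleteSpace X]
    {H : Type*} [NormedAddCommGroup H] [InnerProductSpace ℝ H]
    (G : Subgroup (X ≃ₗᵢ[ℝ] X)) (hstar : PropStar G)
    (S : X ≃L[ℝ] H) :
    ∃ B : X → X → ℝ,
      (∀ x y z : X, B (x + y) z = B x z + B y z) ∧
      (∀ (a : ℝ) (x y : X), B (a • x) y = a * B x y) ∧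
      (∀ x y : X, B x y = B y x) ∧
      (∀ x : X, ‖(S.symm : H →L[ℝ] X)‖⁻¹ ^ 2 * ‖x‖ ^ 2 ≤ B x x ∧
        B x x ≤ ‖(S : X →L[ℝ] H)‖ ^ 2 * ‖x‖ ^ 2) ∧
      (∀ T : X →L[ℝ] X, InSOTClosure G T → ∀ x y : X, B (T x) (T y) = B x y) := by
  classical
  set c := ‖(S.symm : H →L[ℝ] X)‖⁻¹ ^ 2
  set C := ‖(S : X →L[ℝ] H)‖ ^ 2
  choose B hB hB_bounds hB_low hB_inv using
    fun i : Finset G × Finset X => hstar.exists_isSymmBilinForm S i.1 i.2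
  obtain ⟨L, hL⟩ := IsSymmBilinForm.exists_mapClusterPt (l := atTop) (sq_nonneg _) hB
    (fun i x => (hB_bounds i x).1) (fun i x => (hB_bounds i x).2)
  have limit {P : (X → X → ℝ) → Prop} (hP : IsClosed {B | P B})
      (h : ∀ᶠ i in atTop, P (B i)) : P L := hP.mem_of_mapClusterPt hL h
  have hL_form : IsSymmBilinForm L := limit IsSymmBilinForm.isClosed_setOf (.of_forall hB)
  have hL_le x : L x x ≤ C * ‖x‖ ^ 2 :=
    limit (isClosed_le (continuous_apply_apply x x) continuous_const)
      (.of_forall fun i => (hB_bounds i x).2)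
  have hL_ge x : c * ‖x‖ ^ 2 ≤ L x x :=
    limit (isClosed_le continuous_const (continuous_apply_apply x x)) <|
      (eventually_ge_atTop (∅, {x})).mono fun i hi =>
        hB_low i x (hi.2 (Finset.mem_singleton_self x))
  have hL_inv (T) (hT : T ∈ G) x y : L (T x) (T y) = L x y :=
    limit (isClosed_eq (continuous_apply_apply _ _) (continuous_apply_apply x y)) <|
      (eventually_ge_atTop ({⟨T, hT⟩}, ∅)).mono fun i hi =>
        hB_inv i _ (hi.1 (Finset.mem_singleton_self _)) x y
  have hL_cont := hL_form.continuous (fun x => (by positivity : 0 ≤ c * ‖x‖ ^ 2).trans (hL_ge x))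
    (sq_nonneg _) hL_le
  exact ⟨L, hL_form.add_left, hL_form.smul_left, hL_form.symm, fun x => ⟨hL_ge x, hL_le x⟩,
    fun T hT => hT.apply_eq hL_cont hL_inv⟩
end

section
/- Let X be a real Banach space and let x, y, z₀ ∈ S_X with dist(y, span{z₀}) = 1, and let T₂ be a surjective linear isometry of X with max(‖T₂(z₀) − z₀‖, ‖T₂(y) − x‖) < ε/4 for some 0 < ε < 1. Suppose g, h ∈ X* with ‖g‖, ‖h‖ ≤ 2, g(z₀) = h(y) = 1, g(y) = 0, h(z₀) = 0. Then U(v) := T₂(v) + g(v)(z₀ − T₂(z₀)) + h(v)(x − T₂(y)) defines a bounded linear isomorphism of X with U(z₀) = z₀, U(y) = x, and ‖T₂ − U‖ < ε. -/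
/-!
`U` differs from `T₂` by the rank-two operator `g ⊗ (z₀ - T₂ z₀) + h ⊗ (x - T₂ y)`, of norm less
than `2 · ε/4 + 2 · ε/4 = ε`, and the biorthogonality of `g, h` against `z₀, y` gives `U z₀ = z₀`,
`U y = x`. Since `ε < 1`, `U = T₂ (1 - T₂⁻¹ (T₂ - U))` is invertible by the Neumann series.
-/

theorem LinearIsometryEquiv.isUnit_of_norm_sub_lt_one {𝕜 E : Type*} [NontriviallyNormedField 𝕜]
    [NormedAddCommGroup E] [NormedSpace 𝕜 E] [CompleteSpace E] (T : E ≃ₗᵢ[𝕜] E)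
    {V : E →L[𝕜] E} (hV : ‖(T : E →L[𝕜] E) - V‖ < 1) : IsUnit V := by
  have hT : IsUnit (T : E →L[𝕜] E) :=
    (ContinuousLinearEquiv.toUnit T.toContinuousLinearEquiv).isUnit
  set t := (T.symm : E →L[𝕜] E) * ((T : E →L[𝕜] E) - V)
  have ht : ‖t‖ < 1 := by rwa [ContinuousLinearMap.opNorm_linearIsometryEquiv_mul]
  have hTT : (T : E →L[𝕜] E) * (T.symm : E →L[𝕜] E) = 1 := by ext; simp
  have hV : V = (T : E →L[𝕜] E) * (1 - t) := by
    rw [mul_sub, mul_one, ← mul_assoc, hTT, one_mul, sub_sub_cancel]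
  exact hV ▸ hT.mul (isUnit_one_sub_of_norm_lt_one ht)

theorem stmt13_general {X : Type*} [NormedAddCommGroup X] [NormedSpace ℝ X] [CompleteSpace X]
    (x y z₀ : X)
    (T₂ : X ≃ₗᵢ[ℝ] X) {ε : ℝ} (hε₁ : ε < 1)
    (hT₂ : max ‖T₂ z₀ - z₀‖ ‖T₂ y - x‖ < ε / 4)
    (g h : X →L[ℝ] ℝ) (hg : ‖g‖ ≤ 2) (hh : ‖h‖ ≤ 2)
    (hgz : g z₀ = 1) (hhy : h y = 1) (hgy : g y = 0) (hhz : h z₀ = 0) :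
    ∃ U : X ≃L[ℝ] X,
      (∀ v : X, U v = T₂ v + g v • (z₀ - T₂ z₀) + h v • (x - T₂ y)) ∧
      U z₀ = z₀ ∧ U y = x ∧
      ‖(T₂ : X →L[ℝ] X) - (U : X →L[ℝ] X)‖ < ε := by
  set V : X →L[ℝ] X := T₂ + g.smulRight (z₀ - T₂ z₀) + h.smulRight (x - T₂ y)
  have hclose : ‖(T₂ : X →L[ℝ] X) - V‖ < ε := by
    rw [max_lt_iff, norm_sub_rev, norm_sub_rev (T₂ y)] at hT₂
    calc ‖(T₂ : X →L[ℝ] X) - V‖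
        = ‖g.smulRight (z₀ - T₂ z₀) + h.smulRight (x - T₂ y)‖ := by
          rw [← norm_neg]; congr 1; simp only [V]; abel
      _ ≤ ‖g‖ * ‖z₀ - T₂ z₀‖ + ‖h‖ * ‖x - T₂ y‖ := by
          grw [norm_add_le, ContinuousLinearMap.norm_smulRight_apply,
            ContinuousLinearMap.norm_smulRight_apply]
      _ ≤ 2 * ‖z₀ - T₂ z₀‖ + 2 * ‖x - T₂ y‖ := by gcongr
      _ < ε := by linarith
  obtain ⟨u, hu⟩ := T₂.isUnit_of_norm_sub_lt_one (V := V) (hclose.trans hε₁)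
  refine ⟨.ofUnit u, fun v => ?_, ?_, ?_, ?_⟩
  · change (u : X →L[ℝ] X) v = _
    simp [hu, V]
  · change (u : X →L[ℝ] X) z₀ = z₀
    simp [hu, V, hgz, hhz]
  · change (u : X →L[ℝ] X) y = x
    simp [hu, V, hgy, hhy]
  · change ‖(T₂ : X →L[ℝ] X) - u‖ < ε
    rwa [hu]

theorem stmt13 {X : Type*} [NormedAddCommGroup X] [NormedSpace ℝ X] [CompleteSpace X]
    (x y z₀ : X) (hx : ‖x‖ = 1) (hy : ‖y‖ = 1) (hz₀ : ‖z₀‖ = 1)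
    (hdist : Metric.infDist y (Submodule.span ℝ {z₀} : Set X) = 1)
    (T₂ : X ≃ₗᵢ[ℝ] X) {ε : ℝ} (hε₀ : 0 < ε) (hε₁ : ε < 1)
    (hT₂ : max ‖T₂ z₀ - z₀‖ ‖T₂ y - x‖ < ε / 4)
    (g h : X →L[ℝ] ℝ) (hg : ‖g‖ ≤ 2) (hh : ‖h‖ ≤ 2)
    (hgz : g z₀ = 1) (hhy : h y = 1) (hgy : g y = 0) (hhz : h z₀ = 0) :
    ∃ U : X ≃L[ℝ] X,
      (∀ v : X, U v = T₂ v + g v • (z₀ - T₂ z₀) + h v • (x - T₂ y)) ∧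
      U z₀ = z₀ ∧ U y = x ∧
      ‖(T₂ : X →L[ℝ] X) - (U : X →L[ℝ] X)‖ < ε :=
  stmt13_general x y z₀ T₂ hε₁ hT₂ g h hg hh hgz hhy hgy hhz
end

section
/- Let X be a real Banach space whose norm ‖·‖ is convex-transitive (with respect to the full isometry group), and suppose |||·||| is an equivalent norm on X that is invariant under every surjective linear isometry of (X, ‖·‖), with ‖·‖ ≤ |||·||| and sup{‖y‖ : |||y||| = 1} = 1. Then ‖·‖ = |||·|||. -/
/-!
A continuous seminorm is convex and its sublevel sets are closed, so an isometry-invariant one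
takes on the closed convex hull of the orbit of a unit vector `u` no value larger than at `u`.
By convex-transitivity that hull is the whole unit ball, so the seminorm is constant on the unit
sphere, i.e. it is `λ ‖·‖`. The normalisation of the supremum then reads `λ⁻¹ = 1`.
-/

open Metric Set

def ConvexTransitive (X : Type*) [NormedAddCommGroup X] [NormedSpace ℝ X] : Prop :=
  ∀ x : X, ‖x‖ = 1 →
    closure (convexHull ℝ {y : X | ∃ T : X ≃ₗᵢ[ℝ] X, y = T x}) = closedBall (0 : X) 1

section

variable {X : Type*} [NormedAddCommGroup X] [NormedSpace ℝ X]

theorem ConvexOn.le_of_mem_closure_convexHull_orbit {f : X → ℝ} (hf : ConvexOn ℝ univ f)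
    (hf' : LowerSemicontinuous f) (hinv : ∀ (T : X ≃ₗᵢ[ℝ] X) (x : X), f (T x) = f x)
    {u x : X} (hx : x ∈ closure (convexHull ℝ {y : X | ∃ T : X ≃ₗᵢ[ℝ] X, y = T u})) :
    f x ≤ f u := by
  have hclosed : IsClosed {y | f y ≤ f u} := hf'.isClosed_preimage (f u)
  have hconvex : Convex ℝ {y | f y ≤ f u} := by simpa using hf.convex_le (f u)
  refine closure_minimal (convexHull_min ?_ hconvex) hclosed hx
  rintro _ ⟨T, rfl⟩
  exact (hinv T u).le

theorem Seminorm.eq_mul_norm_of_convexTransitive (hX : ConvexTransitive X)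
    (p : Seminorm ℝ X) (hp : Continuous p) (hinv : ∀ (T : X ≃ₗᵢ[ℝ] X) (x : X), p (T x) = p x)
    {u : X} (hu : ‖u‖ = 1) (x : X) : p x = p u * ‖x‖ := by
  have hle : ∀ v w : X, ‖v‖ = 1 → ‖w‖ = 1 → p w ≤ p v := fun v w hv hw ↦
    p.convexOn.le_of_mem_closure_convexHull_orbit hp.lowerSemicontinuous hinv
      (by rw [hX v hv]; simp [hw])
  rcases eq_or_ne x 0 with rfl | hx
  · simp
  have hv : ‖‖x‖⁻¹ • x‖ = 1 := norm_smul_inv_norm hx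
  calc p x = p (‖x‖ • ‖x‖⁻¹ • x) := by rw [smul_inv_smul₀ (norm_ne_zero_iff.mpr hx)]
    _ = p u * ‖x‖ := by
      rw [map_smul_eq_mul, norm_norm, mul_comm, le_antisymm (hle _ _ hu hv) (hle _ _ hv hu)]

/-- For `c = 0` both sides vanish: the set is empty and `sSup ∅ = 0 = 0⁻¹`. -/
theorem sSup_norm_of_eq_const_mul_norm [Nontrivial X] {N : X → ℝ} {c : ℝ} (hc : 0 ≤ c)
    (hN : ∀ y, N y = c * ‖y‖) : sSup {r : ℝ | ∃ y : X, N y = 1 ∧ r = ‖y‖} = c⁻¹ := by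
  rcases hc.eq_or_lt with rfl | hc
  · simp [hN]
  obtain ⟨v, hv⟩ := exists_norm_eq X (inv_nonneg.mpr hc.le)
  suffices {r : ℝ | ∃ y : X, N y = 1 ∧ r = ‖y‖} = {c⁻¹} by rw [this, csSup_singleton]
  ext r
  simp only [mem_ofPred_eq, mem_singleton_iff, hN]
  constructor
  · rintro ⟨y, hy, rfl⟩
    exact (inv_eq_of_mul_eq_one_right hy).symm
  · rintro rfl
    exact ⟨v, by rw [hv, mul_inv_cancel₀ hc.ne'], hv.symm⟩

end

theorem stmt14_general {X : Type*} [NormedAddCommGroup X] [NormedSpace ℝ X]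
    (hconv : ∀ x : X, ‖x‖ = 1 →
      closure (convexHull ℝ {y : X | ∃ T : X ≃ₗᵢ[ℝ] X, y = T x})
        = Metric.closedBall (0 : X) 1)
    (N : X → ℝ)
    (hNsmul : ∀ (a : ℝ) (x : X), N (a • x) = |a| * N x)
    (hNadd : ∀ x y : X, N (x + y) ≤ N x + N y)
    (hNequiv : ∃ c : ℝ, ∀ x : X, N x ≤ c * ‖x‖)
    (hNinv : ∀ (T : X ≃ₗᵢ[ℝ] X) (x : X), N (T x) = N x)
    (hsup : sSup {r : ℝ | ∃ y : X, N y = 1 ∧ r = ‖y‖} = 1) :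
    ∀ x : X, ‖x‖ = N x := by
  obtain ⟨c, hc⟩ := hNequiv
  let p : Seminorm ℝ X := .of N hNadd fun a x ↦ by rw [hNsmul, Real.norm_eq_abs]
  have hp : Continuous p := by
    refine Seminorm.continuous_of_le (q := c.toNNReal • normSeminorm ℝ X) ?_ fun x ↦ ?_
    · simp only [FunLike.coe_smul, coe_normSeminorm]
      fun_prop
    · exact (hc x).trans (mul_le_mul_of_nonneg_right (Real.le_coe_toNNReal c) (norm_nonneg x))
  intro x
  rcases eq_or_ne x 0 with rfl | hx
  · exact norm_zero.trans (map_zero p).symm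
  have : Nontrivial X := nontrivial_of_ne x 0 hx
  have hN : ∀ y, N y = N (‖x‖⁻¹ • x) * ‖y‖ :=
    p.eq_mul_norm_of_convexTransitive hconv hp hNinv (norm_smul_inv_norm hx)
  have hNu : N (‖x‖⁻¹ • x) = 1 := by
    rwa [sSup_norm_of_eq_const_mul_norm (apply_nonneg p _) hN, inv_eq_one] at hsup
  rw [hN x, hNu, one_mul]

theorem stmt14 {X : Type*} [NormedAddCommGroup X] [NormedSpace ℝ X] [CompleteSpace X]
    (hconv : ∀ x : X, ‖x‖ = 1 →
      closure (convexHull ℝ {y : X | ∃ T : X ≃ₗᵢ[ℝ] X, y = T x})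
        = Metric.closedBall (0 : X) 1)
    (N : X → ℝ)
    (hN₀ : ∀ x : X, N x = 0 ↔ x = 0)
    (hNsmul : ∀ (a : ℝ) (x : X), N (a • x) = |a| * N x)
    (hNadd : ∀ x y : X, N (x + y) ≤ N x + N y)
    (hNequiv : ∃ c : ℝ, ∀ x : X, N x ≤ c * ‖x‖)
    (hNinv : ∀ (T : X ≃ₗᵢ[ℝ] X) (x : X), N (T x) = N x)
    (hle : ∀ x : X, ‖x‖ ≤ N x)
    (hsup : sSup {r : ℝ | ∃ y : X, N y = 1 ∧ r = ‖y‖} = 1) :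
    ∀ x : X, ‖x‖ = N x :=
  stmt14_general hconv N hNsmul hNadd hNequiv hNinv hsup
end

section
/- If H is a real Hilbert space, then the subgroup G_F of surjective linear isometries T with Rank(T − Id) < ∞ is dense in the full isometry group G(H) in the strong operator topology: for every surjective linear isometry U of H, every finite set x₁,…,xₙ ∈ H, and every ε > 0, there exists T ∈ G_F with ‖T(xᵢ) − U(xᵢ)‖ < ε for all i. -/
/-!
Let `K` be the (finite-dimensional) span of the `xᵢ` and the `U xᵢ`. The isometry `U` maps the
span of the `xᵢ` into `K`, so in finite dimension it extends to an orthogonal map `f` of `K`.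
Then `T = f ⊕ id` on `H = K ⊕ Kᗮ` is a surjective isometry with `range (T - id) ≤ K`, and
`T xᵢ = U xᵢ` exactly.
-/

section

variable {𝕜 E : Type*} [RCLike 𝕜] [NormedAddCommGroup E] [InnerProductSpace 𝕜 E]
  {K : Submodule 𝕜 E} [K.HasOrthogonalProjection]

namespace LinearIsometry

noncomputable def extendById (L : K →ₗᵢ[𝕜] K) : E →ₗᵢ[𝕜] E where
  toLinearMap := K.subtype ∘ₗ L.toLinearMap ∘ₗ K.orthogonalProjectionOnto.toLinearMap
    + Kᗮ.starProjection.toLinearMap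
  norm_map' y := by
    have horth : inner 𝕜 (L (K.orthogonalProjectionOnto y) : E) (Kᗮ.starProjection y) = 0 :=
      Submodule.inner_right_of_mem_orthogonal (L _).2 (Kᗮ.starProjection_apply_mem y)
    change ‖(L (K.orthogonalProjectionOnto y) : E) + Kᗮ.starProjection y‖ = ‖y‖
    rw [← sq_eq_sq₀ (norm_nonneg _) (norm_nonneg _), K.norm_sq_eq_add_norm_sq_starProjection y,
      sq, norm_add_sq_eq_norm_sq_add_norm_sq_of_inner_eq_zero _ _ horth]
    have hL : ‖(L (K.orthogonalProjectionOnto y) : E)‖ = ‖K.starProjection y‖ := L.norm_map _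
    rw [hL, sq, sq]

theorem extendById_apply (L : K →ₗᵢ[𝕜] K) (y : E) :
    L.extendById y = L (K.orthogonalProjectionOnto y) + Kᗮ.starProjection y :=
  rfl

theorem extendById_add_of_mem_orthogonal (L : K →ₗᵢ[𝕜] K) (k : K) {w : E} (hw : w ∈ Kᗮ) :
    L.extendById (k + w) = L k + w := by
  rw [extendById_apply, map_add K.orthogonalProjectionOnto, map_add L, map_add Kᗮ.starProjection,
    K.orthogonalProjectionOnto_mem_subspace_eq_self,
    K.orthogonalProjectionOnto_apply_of_mem_orthogonal hw, map_zero, add_zero,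
    K.starProjection_orthogonal_apply_eq_zero k.2, Kᗮ.starProjection_eq_self_iff.2 hw, zero_add]

theorem extendById_coe (L : K →ₗᵢ[𝕜] K) (k : K) : L.extendById k = L k := by
  simpa using L.extendById_add_of_mem_orthogonal k Kᗮ.zero_mem

theorem range_extendById_sub_id_le (L : K →ₗᵢ[𝕜] K) :
    LinearMap.range (L.extendById.toLinearMap - LinearMap.id) ≤ K := by
  rintro _ ⟨y, rfl⟩
  obtain ⟨k, hk, w, hw, rfl⟩ := K.exists_add_mem_mem_orthogonal y
  have hkw := L.extendById_add_of_mem_orthogonal ⟨k, hk⟩ hw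
  simp only [LinearMap.sub_apply, coe_toLinearMap, LinearMap.id_apply] at hkw ⊢
  rw [hkw, add_sub_add_right_eq_sub]
  exact K.sub_mem (L _).2 hk

end LinearIsometry

namespace LinearIsometryEquiv

theorem surjective_extendById (f : K ≃ₗᵢ[𝕜] K) :
    Function.Surjective f.toLinearIsometry.extendById := by
  intro y
  obtain ⟨k, hk, w, hw, rfl⟩ := K.exists_add_mem_mem_orthogonal y
  exact ⟨f.symm ⟨k, hk⟩ + w, by
    simp [LinearIsometry.extendById_add_of_mem_orthogonal _ _ hw]⟩

noncomputable def extendById (f : K ≃ₗᵢ[𝕜] K) : E ≃ₗᵢ[𝕜] E :=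
  .ofSurjective _ f.surjective_extendById

end LinearIsometryEquiv

end

theorem LinearIsometry.exists_linearIsometryEquiv_eq_on_of_map_le {𝕜 E : Type*} [RCLike 𝕜]
    [NormedAddCommGroup E] [InnerProductSpace 𝕜 E] (U : E →ₗᵢ[𝕜] E) {K V : Submodule 𝕜 E}
    [FiniteDimensional 𝕜 K]
    (hVK : V ≤ K) (hUV : V.map U.toLinearMap ≤ K) :
    ∃ f : K ≃ₗᵢ[𝕜] K, ∀ v (hv : v ∈ V), (f ⟨v, hVK hv⟩ : E) = U v := by
  let S : Submodule 𝕜 K := V.comap K.subtype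
  let L : S →ₗᵢ[𝕜] K :=
    { toLinearMap := (U.toLinearMap ∘ₗ K.subtype ∘ₗ S.subtype).codRestrict K
        fun s => hUV ⟨_, s.2, rfl⟩
      norm_map' := fun s => U.norm_map (s : E) }
  refine ⟨L.extend.toLinearIsometryEquiv rfl, fun v hv => ?_⟩
  rw [LinearIsometry.toLinearIsometryEquiv_apply]
  exact congrArg Subtype.val (L.extend_apply ⟨⟨v, hVK hv⟩, hv⟩)

theorem stmt15_general {H : Type*} [NormedAddCommGroup H] [InnerProductSpace ℝ H]
    (U : H ≃ₗᵢ[ℝ] H) (n : ℕ) (x : Fin n → H) {ε : ℝ} (hε : 0 < ε) :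
    ∃ T : H ≃ₗᵢ[ℝ] H,
      FiniteDimensional ℝ (LinearMap.range ((T.toLinearEquiv : H →ₗ[ℝ] H) - LinearMap.id)) ∧
      ∀ i : Fin n, ‖T (x i) - U (x i)‖ < ε := by
  let K := Submodule.span ℝ (Set.range x ∪ Set.range (U ∘ x))
  let V := Submodule.span ℝ (Set.range x)
  have : FiniteDimensional ℝ K :=
    FiniteDimensional.span_of_finite ℝ ((Set.finite_range x).union (Set.finite_range _))
  have hVK : V ≤ K := Submodule.span_mono Set.subset_union_left
  have hUV : V.map U.toLinearIsometry.toLinearMap ≤ K := by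
    rw [Submodule.map_span, ← Set.range_comp]
    exact Submodule.span_mono Set.subset_union_right
  obtain ⟨f, hf⟩ := U.toLinearIsometry.exists_linearIsometryEquiv_eq_on_of_map_le hVK hUV
  refine ⟨f.extendById, Submodule.finiteDimensional_of_le
    f.toLinearIsometry.range_extendById_sub_id_le, fun i => ?_⟩
  have hx : x i ∈ V := Submodule.subset_span ⟨i, rfl⟩
  have hTx : f.extendById (x i) = U (x i) :=
    (f.toLinearIsometry.extendById_coe ⟨x i, hVK hx⟩).trans (hf _ hx)
  simpa [hTx] using hε

theorem stmt15 {H : Type*} [NormedAddCommGroup H] [InnerProductSpace ℝ H] [CompleteSpace H]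
    (U : H ≃ₗᵢ[ℝ] H) (n : ℕ) (x : Fin n → H) {ε : ℝ} (hε : 0 < ε) :
    ∃ T : H ≃ₗᵢ[ℝ] H,
      FiniteDimensional ℝ (LinearMap.range ((T.toLinearEquiv : H →ₗ[ℝ] H) - LinearMap.id)) ∧
      ∀ i : Fin n, ‖T (x i) - U (x i)‖ < ε :=
  stmt15_general U n x hε
end

section
/- Let X be a real Banach space that is maximally normed and admits an inner product (·|·) invariant under its full isometry group G(X), whose induced norm |||x||| = √(x|x) is equivalent to ‖·‖. Then (X, ‖·‖) is isometric to a Hilbert space (indeed ‖·‖ is a constant multiple of |||·|||). -/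
/-!
The map `x ↦ √(B x x)` is a norm equivalent to `‖·‖` and invariant under every `‖·‖`-isometry,
so by maximality every `B`-orthogonal map is a `‖·‖`-isometry. If `B x x = B y y` with `x ≠ y`,
the `B`-reflection in the hyperplane orthogonal to `x - y` swaps `x` and `y`; hence `‖·‖` is
constant on the spheres of `√(B x x)`, and by homogeneity it is a constant multiple of it.
-/

/-- The norm of `X` is maximal: whenever `N` is an equivalent norm whose isometry group
contains that of `‖·‖`, the two isometry groups coincide. -/
def MaximalNorm (X : Type*) [NormedAddCommGroup X] [NormedSpace ℝ X] : Prop :=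
  ∀ N : X → ℝ,
    (∀ x : X, N x = 0 ↔ x = 0) →
    (∀ (a : ℝ) (x : X), N (a • x) = |a| * N x) →
    (∀ x y : X, N (x + y) ≤ N x + N y) →
    (∃ c₁ c₂ : ℝ, 0 < c₁ ∧ ∀ x : X, c₁ * ‖x‖ ≤ N x ∧ N x ≤ c₂ * ‖x‖) →
    (∀ e : X ≃ₗ[ℝ] X, (∀ x, ‖e x‖ = ‖x‖) → ∀ x, N (e x) = N x) →
    (∀ e : X ≃ₗ[ℝ] X, (∀ x, N (e x) = N x) → ∀ x, ‖e x‖ = ‖x‖)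

namespace LinearMap.BilinForm

variable {M : Type*} [AddCommGroup M] [Module ℝ M] {B : LinearMap.BilinForm ℝ M}

theorem sqrt_apply_self_add_le (hB : LinearMap.IsPosSemidef B) (x y : M) :
    √(B (x + y) (x + y)) ≤ √(B x x) + √(B y y) := by
  have hx := hB.nonneg x
  have hy := hB.nonneg y
  have hxy : B x y ≤ √(B x x) * √(B y y) := by
    rw [← Real.sqrt_mul hx]
    exact Real.le_sqrt_of_sq_le (B.apply_sq_le_of_symm hB.nonneg hB.isSymm x y)
  refine Real.sqrt_le_iff.mpr ⟨by positivity, ?_⟩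
  have hyx : B y x = B x y := hB.isSymm.eq y x
  simp only [map_add, LinearMap.add_apply, hyx]
  nlinarith [Real.sq_sqrt hx, Real.sq_sqrt hy]

noncomputable def sqrtSeminorm (hB : LinearMap.IsPosSemidef B) : Seminorm ℝ M where
  toFun x := √(B x x)
  map_zero' := by simp
  add_le' := sqrt_apply_self_add_le hB
  neg' x := by simp
  smul' a x := by
    simp only [map_smul, LinearMap.smul_apply, smul_eq_mul, ← mul_assoc]
    rw [Real.sqrt_mul (mul_self_nonneg a), Real.sqrt_mul_self_eq_abs, Real.norm_eq_abs]

@[simp]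
theorem sqrtSeminorm_apply (hB : LinearMap.IsPosSemidef B) (x : M) :
    sqrtSeminorm hB x = √(B x x) :=
  rfl

theorem exists_isOrthogonal_apply_eq (hB : LinearMap.IsSymm B) (hB₀ : ∀ x, B x x = 0 → x = 0)
    {x y : M} (hxy : B x x = B y y) : ∃ e : M ≃ₗ[ℝ] M, B.IsOrthogonal e ∧ e x = y := by
  rcases eq_or_ne x y with rfl | hne
  · exact ⟨LinearEquiv.refl ℝ M, fun _ _ ↦ rfl, rfl⟩
  set u := x - y
  have hu : B u u ≠ 0 := fun h ↦ sub_ne_zero.mpr hne (hB₀ u h)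
  have hrefl : IsReflective B u := .of_dvd_two B (isUnit_iff_ne_zero.mpr hu).dvd
  refine ⟨Module.reflection (hrefl.coroot_apply_self B), hrefl.isOrthogonal_reflection B hB, ?_⟩
  -- `B u u = 2 B u x` because `B x x = B y y`, so the coroot takes the value `1` at `x`
  have huu : B u u = 2 * B u x := by
    have hyx : B y x = B x y := by simpa using hB.eq y x
    simp only [u, map_sub, LinearMap.sub_apply]
    linarith
  have hcoroot : hrefl.coroot B x = 1 := by
    have := hrefl.apply_self_mul_coroot_apply B (y := x)
    rw [← huu] at this
    exact (mul_eq_left₀ hu).mp this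
  rw [Module.reflection_apply, hcoroot, one_smul, sub_sub_cancel]

end LinearMap.BilinForm

open LinearMap (BilinForm)

theorem Seminorm.exists_norm_eq_mul_of_norm_eq_norm {E : Type*} [NormedAddCommGroup E]
    [NormedSpace ℝ E] (p : Seminorm ℝ E)
    (hp : ∀ x, p x = 0 → x = 0) (h : ∀ x y, p x = p y → ‖x‖ = ‖y‖) :
    ∃ c, 0 < c ∧ ∀ x, ‖x‖ = c * p x := by
  rcases subsingleton_or_nontrivial E with hE | hE
  · exact ⟨1, one_pos, fun x ↦ by simp [Subsingleton.elim x 0]⟩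
  obtain ⟨x₀, hx₀⟩ := exists_ne (0 : E)
  have hp_pos {x : E} (hx : x ≠ 0) : 0 < p x := (apply_nonneg p x).lt_of_ne' (mt (hp x) hx)
  refine ⟨‖x₀‖ / p x₀, div_pos (norm_pos_iff.mpr hx₀) (hp_pos hx₀), fun x ↦ ?_⟩
  rcases eq_or_ne x 0 with rfl | hx
  · simp
  have hx_pos := hp_pos hx
  have hx₀_pos := hp_pos hx₀
  have ht : 0 ≤ p x₀ / p x := (div_pos hx₀_pos hx_pos).le
  have hnorm : p x₀ / p x * ‖x‖ = ‖x₀‖ := by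
    rw [← Real.norm_of_nonneg ht, ← norm_smul]
    exact h _ _ (by rw [map_smul_eq_mul, Real.norm_of_nonneg ht, div_mul_cancel₀ _ hx_pos.ne'])
  rw [← hnorm]
  field_simp

theorem MaximalNorm.exists_norm_eq_mul_sqrt {X : Type*} [NormedAddCommGroup X] [NormedSpace ℝ X]
    (hmax : MaximalNorm X) (B : BilinForm ℝ X) (hB : LinearMap.IsSymm B)
    (hequiv : ∃ c₁ c₂ : ℝ, 0 < c₁ ∧ ∀ x : X, c₁ * ‖x‖ ^ 2 ≤ B x x ∧ B x x ≤ c₂ * ‖x‖ ^ 2)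
    (hinv : ∀ (T : X ≃ₗᵢ[ℝ] X) (x y : X), B (T x) (T y) = B x y) :
    ∃ c : ℝ, 0 < c ∧ ∀ x : X, ‖x‖ = c * √(B x x) := by
  obtain ⟨c₁, c₂, hc₁, hc⟩ := hequiv
  have hB₀ (x : X) (hx : B x x = 0) : x = 0 := by
    have := (hc x).1
    rw [hx] at this
    exact norm_eq_zero.mp (pow_eq_zero_iff two_ne_zero |>.mp
      (le_antisymm (nonpos_of_mul_nonpos_right this hc₁) (sq_nonneg _)))
  have hpsd : LinearMap.IsPosSemidef B :=
    ⟨hB, ⟨fun x ↦ (mul_nonneg hc₁.le (sq_nonneg _)).trans (hc x).1⟩⟩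
  set p := B.sqrtSeminorm hpsd
  have hp₀ (x : X) : p x = 0 ↔ x = 0 :=
    ⟨fun h ↦ hB₀ x (Real.sqrt_eq_zero (hpsd.nonneg x) |>.mp h), fun h ↦ h ▸ map_zero p⟩
  have hp_equiv : ∃ d₁ d₂ : ℝ, 0 < d₁ ∧ ∀ x : X, d₁ * ‖x‖ ≤ p x ∧ p x ≤ d₂ * ‖x‖ := by
    refine ⟨√c₁, √c₂, Real.sqrt_pos.mpr hc₁, fun x ↦ ⟨?_, ?_⟩⟩
    · calc √c₁ * ‖x‖ = √(c₁ * ‖x‖ ^ 2) := by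
            rw [Real.sqrt_mul hc₁.le, Real.sqrt_sq (norm_nonneg x)]
        _ ≤ p x := Real.sqrt_le_sqrt (hc x).1
    · calc p x ≤ √(c₂ * ‖x‖ ^ 2) := Real.sqrt_le_sqrt (hc x).2
        _ = √c₂ * ‖x‖ := by rw [Real.sqrt_mul' _ (sq_nonneg _), Real.sqrt_sq (norm_nonneg x)]
  have hisom := hmax p hp₀ (fun a x ↦ by simpa using map_smul_eq_mul p a x) (map_add_le_add p)
    hp_equiv (fun e he x ↦ congrArg Real.sqrt (hinv ⟨e, he⟩ x x))
  refine p.exists_norm_eq_mul_of_norm_eq_norm (fun x ↦ (hp₀ x).mp) fun x y hxy ↦ ?_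
  have hxy' : B x x = B y y := by
    simpa [p, Real.sqrt_inj (hpsd.nonneg x) (hpsd.nonneg y)] using hxy
  obtain ⟨e, he, rfl⟩ := B.exists_isOrthogonal_apply_eq hB hB₀ hxy'
  exact (hisom e (fun z ↦ by simp [p, he z z]) x).symm

theorem stmt17_general {X : Type*} [NormedAddCommGroup X] [NormedSpace ℝ X]
    (hmax : MaximalNorm X)
    (B : X → X → ℝ)
    (hbil₁ : ∀ x y z : X, B (x + y) z = B x z + B y z)
    (hbil₂ : ∀ (a : ℝ) (x y : X), B (a • x) y = a * B x y)
    (hsymm : ∀ x y : X, B x y = B y x)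
    (hequiv : ∃ c₁ c₂ : ℝ, 0 < c₁ ∧ ∀ x : X, c₁ * ‖x‖ ^ 2 ≤ B x x ∧ B x x ≤ c₂ * ‖x‖ ^ 2)
    (hinv : ∀ (T : X ≃ₗᵢ[ℝ] X) (x y : X), B (T x) (T y) = B x y) :
    ∃ c : ℝ, 0 < c ∧ ∀ x : X, ‖x‖ = c * Real.sqrt (B x x) := by
  let B' : BilinForm ℝ X := LinearMap.mk₂ ℝ B hbil₁ hbil₂
    (fun x y z ↦ by rw [hsymm, hbil₁, hsymm y, hsymm z])
    (fun a x y ↦ by rw [hsymm, hbil₂, hsymm, smul_eq_mul])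
  exact hmax.exists_norm_eq_mul_sqrt B' (LinearMap.isSymm_def.mpr hsymm) hequiv hinv

theorem stmt17 {X : Type*} [NormedAddCommGroup X] [NormedSpace ℝ X] [CompleteSpace X]
    (hmax : MaximalNorm X)
    (B : X → X → ℝ)
    (hbil₁ : ∀ x y z : X, B (x + y) z = B x z + B y z)
    (hbil₂ : ∀ (a : ℝ) (x y : X), B (a • x) y = a * B x y)
    (hsymm : ∀ x y : X, B x y = B y x)
    (hequiv : ∃ c₁ c₂ : ℝ, 0 < c₁ ∧ ∀ x : X, c₁ * ‖x‖ ^ 2 ≤ B x x ∧ B x x ≤ c₂ * ‖x‖ ^ 2)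
    (hinv : ∀ (T : X ≃ₗᵢ[ℝ] X) (x y : X), B (T x) (T y) = B x y) :
    ∃ c : ℝ, 0 < c ∧ ∀ x : X, ‖x‖ = c * Real.sqrt (B x x) :=
  stmt17_general hmax B hbil₁ hbil₂ hsymm hequiv hinv
end
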